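/- If S ⊆ ω₁ is stationary, then the tree T(S) of closed bounded subsets of S ordered by end-extension is not special, i.e., T(S) is not the union of countably many antichains. Consequently the comparability graph G(T(S)) has uncountable chromatic number. -/

import Mathlib

open Ordinal

/-- A set of ordinals is sup-closed if it contains the supremum of each of its
nonempty subsets; for a set of ordinals this means it is closed and has a maximum. -/
def SupClosed' (t : Set Ordinal) : Prop :=
  ∀ u : Set Ordinal, u ⊆ t → u.Nonempty → sSup u ∈ t

/-- The tree `T(S)`: nonempty closed bounded subsets of `S`, ordered by
end-extension. -/
@[ext]
structure TS (S : Set Ordinal) where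
  carrier : Set Ordinal
  nonempty' : carrier.Nonempty
  subset' : carrier ⊆ S
  closed' : SupClosed' carrier

/-- `s ≤ t` iff `s` is an initial segment of `t`. -/
instance TS.instPartialOrder (S : Set Ordinal) : PartialOrder (TS S) where
  le s t := s.carrier ⊆ t.carrier ∧
    ∀ a ∈ s.carrier, ∀ b ∈ t.carrier, b ≤ a → b ∈ s.carrier
  le_refl s := ⟨subset_rfl, fun _ _ b hb _ => hb⟩
  le_trans s t u h1 h2 := ⟨h1.1.trans h2.1, fun a ha b hb hba =>
    h1.2 a ha b (h2.2 a (h1.1 ha) b hb hba) hba⟩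
  le_antisymm s t h1 h2 := TS.ext (subset_antisymm h1.1 h2.1)

/-- `S` is a stationary subset of `ω₁`: it meets every club of `ω₁`. -/
def IsStationary' (S : Set Ordinal) : Prop :=
  S ⊆ Set.Iio ω₁ ∧
  ∀ C : Set Ordinal, C ⊆ Set.Iio ω₁ → (∀ a < ω₁, ∃ b ∈ C, a ≤ b) →
    (∀ u : Set Ordinal, u ⊆ C → u.Nonempty → sSup u < ω₁ → sSup u ∈ C) →
    (S ∩ C).Nonempty

/-- The comparability graph of a partial order. -/
def compGraph (T : Type*) [PartialOrder T] : SimpleGraph T where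
  Adj x y := x < y ∨ y < x
  symm := ⟨fun x y (h : x < y ∨ y < x) => by tauto⟩
  loopless := ⟨fun x (h : x < x ∨ x < x) => by rcases h with h | h <;> exact lt_irrefl x h⟩

/-! ### Auxiliary material for the proof -/

namespace TSproof

open Set Cardinal Classical

noncomputable section

lemma omega1_isLimit : Order.IsSuccLimit (ω₁ : Ordinal) := by
  rw [← Cardinal.ord_aleph]
  exact Cardinal.isSuccLimit_ord (Cardinal.aleph0_le_aleph 1)

lemma omega1_pos : (0 : Ordinal) < ω₁ := omega1_isLimit.pos

lemma succ_lt_omega1 {γ : Ordinal} (h : γ < ω₁) : γ + 1 < ω₁ := by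
  rw [Ordinal.add_one_eq_succ]; exact omega1_isLimit.succ_lt h

lemma lt_self_add_one (a : Ordinal) : a < a + 1 := by
  rw [Ordinal.add_one_eq_succ]; exact Order.lt_succ _

lemma countable_Iio {γ : Ordinal} (h : γ < ω₁) : (Set.Iio γ).Countable := by
  rw [Cardinal.countable_iff_lt_aleph_one, Ordinal.mk_Iio_ordinal]
  have h1 : γ.card < ℵ_ 1 := by rw [← Cardinal.lt_ord, Cardinal.ord_aleph]; exact h
  have h2 := Cardinal.lift_lt.2 h1
  rw [Cardinal.lift_aleph] at h2
  simpa using h2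

/-- A countable set of ordinals below `ω₁` has a strict upper bound below `ω₁`. -/
lemma bound_of_countable {s : Set Ordinal} (hc : s.Countable) (hs : s ⊆ Set.Iio ω₁) :
    ∃ b, b < ω₁ ∧ ∀ x ∈ s, x < b := by
  rcases s.eq_empty_or_nonempty with rfl | hne
  · exact ⟨0, omega1_pos, by simp⟩
  · obtain ⟨f, rfl⟩ := hc.exists_eq_range hne
    have hf : ∀ n, f n < ω₁ := fun n => hs (mem_range_self n)
    have hsup : iSup f < ω₁ := by
      rw [← Cardinal.ord_aleph] at hf ⊢
      rw [Cardinal.ord_aleph] at hf ⊢; exact Ordinal.iSup_lt_omega_one hf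
    refine ⟨iSup f + 1, succ_lt_omega1 hsup, ?_⟩
    rintro x ⟨n, rfl⟩
    exact lt_of_le_of_lt (le_ciSup (Ordinal.bddAbove_range f) n) (lt_self_add_one _)

variable {S : Set Ordinal}

/-- The maximum of an element of `T(S)`. -/
def mx (t : TS S) : Ordinal := sSup t.carrier

lemma mx_mem (t : TS S) : mx t ∈ t.carrier := t.closed' _ subset_rfl t.nonempty'

section bounded
variable (hS1 : S ⊆ Set.Iio ω₁)
include hS1

lemma bddAbove_carrier (t : TS S) : BddAbove t.carrier :=
  ⟨ω₁, fun x hx => (hS1 (t.subset' hx)).le⟩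

lemma le_mx {t : TS S} {x : Ordinal} (hx : x ∈ t.carrier) : x ≤ mx t :=
  le_csSup (bddAbove_carrier hS1 t) hx

lemma mx_lt_omega1 (t : TS S) : mx t < ω₁ := hS1 (t.subset' (mx_mem t))

lemma mx_mono {s t : TS S} (h : s ≤ t) : mx s ≤ mx t :=
  le_mx hS1 (h.1 (mx_mem s))

end bounded

lemma TS.le_def {s t : TS S} : s ≤ t ↔ (s.carrier ⊆ t.carrier ∧
    ∀ a ∈ s.carrier, ∀ b ∈ t.carrier, b ≤ a → b ∈ s.carrier) := Iff.rfl

lemma supClosed_insert {t : Set Ordinal} (ht : SupClosed' t) {s : Ordinal}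
    (h : ∀ x ∈ t, x < s) : SupClosed' (insert s t) := by
  intro u hu hne
  by_cases hsu : s ∈ u
  · have hub : ∀ x ∈ u, x ≤ s := by
      intro x hx
      rcases hu hx with rfl | hx'
      · exact le_rfl
      · exact (h x hx').le
    have : sSup u = s := le_antisymm (csSup_le hne hub) (le_csSup ⟨s, hub⟩ hsu)
    rw [this]; exact mem_insert _ _
  · have hut : u ⊆ t := fun x hx => (hu hx).resolve_left (fun e => hsu (e ▸ hx))
    exact mem_insert_of_mem _ (ht u hut hne)

/-- Extend `t` by one point `s` on top (total function; junk value `t` if invalid). -/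
def ext1 (t : TS S) (s : Ordinal) : TS S :=
  if h : s ∈ S ∧ ∀ x ∈ t.carrier, x < s then
    { carrier := insert s t.carrier
      nonempty' := ⟨s, mem_insert _ _⟩
      subset' := insert_subset h.1 t.subset'
      closed' := supClosed_insert t.closed' h.2 } else t

section ext1
variable {t : TS S} {s : Ordinal} (hv : s ∈ S ∧ ∀ x ∈ t.carrier, x < s)
include hv

lemma ext1_carrier : (ext1 t s).carrier = insert s t.carrier := by
  rw [ext1, dif_pos hv]

lemma le_ext1 : t ≤ ext1 t s := by
  rw [TS.le_def, ext1_carrier hv]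
  refine ⟨subset_insert _ _, ?_⟩
  intro a ha b hb hba
  rcases hb with rfl | hb'
  · exact absurd (lt_of_le_of_lt hba (hv.2 a ha)) (lt_irrefl b)
  · exact hb'

lemma mx_ext1 : mx (ext1 t s) = s := by
  have hub : ∀ x ∈ insert s t.carrier, x ≤ s := by
    rintro x (rfl | hx)
    · exact le_rfl
    · exact (hv.2 x hx).le
  rw [mx, ext1_carrier hv]
  exact le_antisymm (csSup_le ⟨s, mem_insert _ _⟩ hub) (le_csSup ⟨s, hub⟩ (mem_insert _ _))

end ext1

variable (c : TS S → ℕ)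

/-- Choice of an end-extension of `t` of colour `n`, if one exists. -/
def F (t : TS S) (n : ℕ) : TS S :=
  if h : ∃ t', t ≤ t' ∧ c t' = n then h.choose else t

lemma le_F (t : TS S) (n : ℕ) : t ≤ F c t n := by
  unfold F
  by_cases h : ∃ t', t ≤ t' ∧ c t' = n
  · rw [dif_pos h]; exact h.choose_spec.1
  · rw [dif_neg h]

lemma F_color {t : TS S} {n : ℕ} (h : ∃ t', t ≤ t' ∧ c t' = n) : c (F c t n) = n := by
  unfold F; rw [dif_pos h]; exact h.choose_spec.2

variable (t0 : TS S)

/-- Stages of the reachability hull below `β`. -/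
def R (β : Ordinal) : ℕ → Set (TS S)
  | 0 => {t0}
  | j + 1 => R β j ∪ (⋃ n : ℕ, (fun t => F c t n) '' R β j) ∪ Set.image2 ext1 (R β j) (Set.Iio β)

/-- The reachability hull below `β`: everything reachable from `t0` by the operations
`F` and `ext1` with points `< β`. -/
def Reach (β : Ordinal) : Set (TS S) := ⋃ j, R c t0 β j

lemma R_succ_supset {β : Ordinal} {j : ℕ} : R c t0 β j ⊆ R c t0 β (j + 1) :=
  (subset_union_left).trans subset_union_left

lemma F_mem_R {β : Ordinal} {j : ℕ} {t : TS S} (h : t ∈ R c t0 β j) (n : ℕ) :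
    F c t n ∈ R c t0 β (j + 1) :=
  subset_union_left (Or.inr (mem_iUnion.2 ⟨n, mem_image_of_mem _ h⟩))

lemma ext1_mem_R {β : Ordinal} {j : ℕ} {t : TS S} (h : t ∈ R c t0 β j) {s : Ordinal}
    (hs : s < β) : ext1 t s ∈ R c t0 β (j + 1) :=
  subset_union_right (mem_image2_of_mem h hs)

lemma R_mono {β β' : Ordinal} (h : β ≤ β') : ∀ j, R c t0 β j ⊆ R c t0 β' j
  | 0 => subset_rfl
  | j + 1 => by
    refine union_subset (union_subset ?_ ?_) ?_
    · exact (R_mono h j).trans (R_succ_supset c t0)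
    · refine iUnion_subset fun n => ?_
      refine (image_mono (R_mono h j)).trans ?_
      exact fun x hx => subset_union_left (Or.inr (mem_iUnion.2 ⟨n, hx⟩))
    · refine (image2_subset (R_mono h j) (Iio_subset_Iio h)).trans ?_
      exact subset_union_right

lemma t0_mem_R (β : Ordinal) : t0 ∈ R c t0 β 0 := rfl

lemma t0_mem_Reach (β : Ordinal) : t0 ∈ Reach c t0 β :=
  mem_iUnion.2 ⟨0, t0_mem_R c t0 β⟩

lemma R_countable {β : Ordinal} (hβ : (Set.Iio β).Countable) : ∀ j, (R c t0 β j).Countable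
  | 0 => countable_singleton _
  | j + 1 => by
    refine ((R_countable hβ j).union ?_).union ?_
    · exact countable_iUnion fun n => (R_countable hβ j).image _
    · exact (R_countable hβ j).image2 hβ _

lemma Reach_countable {β : Ordinal} (hβ : (Set.Iio β).Countable) : (Reach c t0 β).Countable :=
  countable_iUnion (R_countable c t0 hβ)

lemma Reach_nonempty (β : Ordinal) : (Reach c t0 β).Nonempty :=
  ⟨t0, t0_mem_Reach c t0 β⟩

lemma F_mem_Reach {β : Ordinal} {t : TS S} (h : t ∈ Reach c t0 β) (n : ℕ) :
    F c t n ∈ Reach c t0 β := by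
  obtain ⟨j, hj⟩ := mem_iUnion.1 h
  exact mem_iUnion.2 ⟨j + 1, F_mem_R c t0 hj n⟩

lemma ext1_mem_Reach {β : Ordinal} {t : TS S} (h : t ∈ Reach c t0 β) {s : Ordinal}
    (hs : s < β) : ext1 t s ∈ Reach c t0 β := by
  obtain ⟨j, hj⟩ := mem_iUnion.1 h
  exact mem_iUnion.2 ⟨j + 1, ext1_mem_R c t0 hj hs⟩

/-- At a limit `δ`, everything reachable below `δ` is reachable below some `γ < δ`. -/
lemma R_lt_of_limit {δ : Ordinal} (hδ : Order.IsSuccLimit δ) :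
    ∀ j, ∀ t ∈ R c t0 δ j, ∃ γ, γ < δ ∧ t ∈ R c t0 γ j
  | 0, t, ht => ⟨0, hδ.pos, ht⟩
  | j + 1, t, ht => by
    rcases ht with (ht | ht) | ht
    · obtain ⟨γ, hγ, h⟩ := R_lt_of_limit hδ j t ht
      exact ⟨γ, hγ, R_succ_supset c t0 h⟩
    · obtain ⟨n, t', ht', rfl⟩ := by simpa using ht
      obtain ⟨γ, hγ, h⟩ := R_lt_of_limit hδ j t' ht'
      exact ⟨γ, hγ, F_mem_R c t0 h n⟩
    · obtain ⟨t', ht', s, hs, rfl⟩ := by simpa [Set.mem_image2] using ht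
      obtain ⟨γ, hγ, h⟩ := R_lt_of_limit hδ j t' ht'
      refine ⟨max γ (s + 1), ?_, ext1_mem_R c t0 (R_mono c t0 (le_max_left _ _) j h) ?_⟩
      · exact max_lt hγ (by rw [Ordinal.add_one_eq_succ]; exact hδ.succ_lt hs)
      · exact lt_of_lt_of_le (lt_self_add_one s) (le_max_right _ _)

/-- Key existence lemma for the closure function `g`. -/
lemma exists_g (hS1 : S ⊆ Set.Iio ω₁)
    (hub : ∀ γ < ω₁, ∃ s ∈ S, γ < s ∧ s < ω₁) {γ : Ordinal} (hγ : γ < ω₁) :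
    ∃ β, β < ω₁ ∧ γ < β ∧ (∃ s ∈ S, γ < s ∧ s < β) ∧
      ∀ t ∈ Reach c t0 γ, ∀ n, mx (F c t n) < β := by
  have hcnt : (Reach c t0 γ).Countable := Reach_countable c t0 (countable_Iio hγ)
  obtain ⟨f, hf⟩ := hcnt.exists_eq_range (Reach_nonempty c t0 γ)
  set q : ℕ × ℕ → Ordinal := fun p => mx (F c (f p.1) p.2) with hq
  have hqlt : ∀ p, q p < ω₁ := fun p => mx_lt_omega1 hS1 _
  have hsup : iSup q < ω₁ := by
    rw [← Cardinal.ord_aleph] at hqlt ⊢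
    rw [Cardinal.ord_aleph] at hqlt ⊢; exact Ordinal.iSup_lt_omega_one hqlt
  obtain ⟨s, hsS, hγs, hs1⟩ := hub γ hγ
  refine ⟨max (iSup q) (max s γ) + 1, ?_, ?_, ⟨s, hsS, hγs, ?_⟩, ?_⟩
  · exact succ_lt_omega1 (max_lt hsup (max_lt hs1 hγ))
  · exact lt_of_le_of_lt ((le_max_right s γ).trans (le_max_right _ _)) (lt_self_add_one _)
  · exact lt_of_le_of_lt ((le_max_left s γ).trans (le_max_right _ _)) (lt_self_add_one _)
  · intro t ht n
    rw [hf] at ht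
    obtain ⟨i, rfl⟩ := ht
    exact lt_of_le_of_lt ((le_ciSup (Ordinal.bddAbove_range q) (i, n)).trans
      (le_max_left _ _)) (lt_self_add_one _)

end
end TSproof

open TSproof Set in
/-- If `S ⊆ ω₁` is stationary then `T(S)` is not special (not a countable union of
antichains); consequently the comparability graph `G(T(S))` has no proper colouring
with countably many colours, i.e. uncountable chromatic number. -/
theorem TS_not_special_of_stationary {S : Set Ordinal} (hS : IsStationary' S) :
    (¬ ∃ A : ℕ → Set (TS S), (∀ n, IsAntichain (· ≤ ·) (A n)) ∧
        (⋃ n, A n) = Set.univ) ∧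
    (¬ ∃ f : TS S → ℕ, ∀ x y : TS S, (compGraph (TS S)).Adj x y → f x ≠ f y) := by
  classical
  have main : ¬ ∃ A : ℕ → Set (TS S), (∀ n, IsAntichain (· ≤ ·) (A n)) ∧
      (⋃ n, A n) = Set.univ := by
    rintro ⟨A, hAnt, hU⟩
    have hS1 := hS.1
    -- colour function
    have hex : ∀ x : TS S, ∃ n, x ∈ A n := by
      intro x
      have hx : x ∈ ⋃ n, A n := by rw [hU]; trivial
      exact Set.mem_iUnion.1 hx
    set c : TS S → ℕ := fun x => (hex x).choose with hcdef
    have hc : ∀ x, x ∈ A (c x) := fun x => (hex x).choose_spec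
    have hcc : ∀ x y : TS S, x ≤ y → c x = c y → x = y := by
      intro x y hxy hcxy
      by_contra hne
      exact hAnt (c y) (hcxy ▸ hc x) (hc y) hne hxy
    -- S is nonempty
    have hSne : S.Nonempty := by
      obtain ⟨s, hs, -⟩ := hS.2 (Set.Iio ω₁) subset_rfl
        (fun a ha => ⟨a, ha, le_rfl⟩) (fun u hu hne hlt => hlt)
      exact ⟨s, hs⟩
    obtain ⟨s0, hs0⟩ := hSne
    have ht0closed : SupClosed' {s0} := by
      intro u hu hne
      rcases Set.subset_singleton_iff_eq.1 hu with rfl | rfl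
      · exact absurd hne (by simp)
      · simp
    set t0 : TS S := ⟨{s0}, ⟨s0, rfl⟩, Set.singleton_subset_iff.2 hs0, ht0closed⟩ with ht0def
    -- S is unbounded in ω₁
    have hub : ∀ γ < ω₁, ∃ s ∈ S, γ < s ∧ s < ω₁ := by
      intro γ hγ
      obtain ⟨s, hsS, hsC⟩ := hS.2 {x | γ < x ∧ x < ω₁} (fun x hx => hx.2)
        (fun a ha => ⟨max a (γ + 1), ⟨lt_of_lt_of_le (lt_self_add_one γ) (le_max_right _ _),
          max_lt ha (succ_lt_omega1 hγ)⟩, le_max_left _ _⟩)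
        (by
          rintro u hu ⟨x, hx⟩ hlt
          exact ⟨lt_of_lt_of_le (hu hx).1 (le_csSup ⟨ω₁, fun y hy => (hu hy).2.le⟩ hx), hlt⟩)
      exact ⟨s, hsS, hsC.1, hsC.2⟩
    -- closure function g
    have hg : ∀ γ : Ordinal, γ < ω₁ → ∃ β, β < ω₁ ∧ γ < β ∧ (∃ s ∈ S, γ < s ∧ s < β) ∧
        ∀ t ∈ Reach c t0 γ, ∀ n, mx (F c t n) < β := fun γ hγ => exists_g c t0 hS1 hub hγ
    set g : Ordinal → Ordinal := fun γ => if h : γ < ω₁ then (hg γ h).choose else 0 with hgdef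
    have hgspec : ∀ γ, (h : γ < ω₁) → g γ < ω₁ ∧ γ < g γ ∧ (∃ s ∈ S, γ < s ∧ s < g γ) ∧
        ∀ t ∈ Reach c t0 γ, ∀ n, mx (F c t n) < g γ := by
      intro γ h
      simp only [hgdef, dif_pos h]
      exact (hg γ h).choose_spec
    -- the club C
    set C : Set Ordinal := {δ | δ < ω₁ ∧ mx t0 < δ ∧ ∀ γ < δ, g γ < δ} with hCdef
    have hCsub : C ⊆ Set.Iio ω₁ := fun δ hδ => hδ.1
    have hCunb : ∀ a < ω₁, ∃ b ∈ C, a ≤ b := by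
      intro a ha
      have hB : ∀ β, β < ω₁ → ∃ b, b < ω₁ ∧ β < b ∧ ∀ γ < β, g γ < b := by
        intro β hβ
        have hcnt : (insert β (g '' Set.Iio β)).Countable :=
          (((countable_Iio hβ).image g).insert β)
        have hsub : insert β (g '' Set.Iio β) ⊆ Set.Iio ω₁ := by
          rintro x (rfl | ⟨γ, hγ, rfl⟩)
          · exact hβ
          · exact (hgspec γ (hγ.trans hβ)).1
        obtain ⟨b, hb1, hb2⟩ := bound_of_countable hcnt hsub
        exact ⟨b, hb1, hb2 β (Set.mem_insert _ _),
          fun γ hγ => hb2 _ (Set.mem_insert_of_mem _ ⟨γ, hγ, rfl⟩)⟩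
      set Bf : Ordinal → Ordinal := fun β => if h : β < ω₁ then (hB β h).choose else 0 with hBfdef
      have hBf : ∀ β, (h : β < ω₁) → Bf β < ω₁ ∧ β < Bf β ∧ ∀ γ < β, g γ < Bf β := by
        intro β h
        simp only [hBfdef, dif_pos h]
        exact (hB β h).choose_spec
      set α : ℕ → Ordinal := fun j => Bf^[j] (max a (mx t0 + 1)) with hαdef
      have hα0 : α 0 = max a (mx t0 + 1) := rfl
      have hαsucc : ∀ j, α (j + 1) = Bf (α j) := by
        intro j; simp only [hαdef, Function.iterate_succ_apply']
      have hαlt : ∀ j, α j < ω₁ := by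
        intro j; induction j with
        | zero => exact max_lt ha (succ_lt_omega1 (mx_lt_omega1 hS1 t0))
        | succ j ih => rw [hαsucc]; exact (hBf _ ih).1
      have hαle : ∀ j, α j ≤ iSup α := fun j => le_ciSup (Ordinal.bddAbove_range α) j
      have hδlt : iSup α < ω₁ := by
        rw [← Cardinal.ord_aleph]
        rw [Cardinal.ord_aleph]; exact Ordinal.iSup_lt_omega_one
          (by exact hαlt)
      refine ⟨iSup α, ⟨hδlt, ?_, ?_⟩, ?_⟩
      · exact lt_of_lt_of_le (lt_of_lt_of_le (lt_self_add_one _)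
          ((le_max_right _ _).trans hα0.ge)) (hαle 0)
      · intro γ hγ
        have hj : ∃ j, γ < α j := by
          by_contra hcon
          push_neg at hcon
          exact absurd (ciSup_le hcon) (not_le.2 hγ)
        obtain ⟨j, hj⟩ := hj
        calc g γ < Bf (α j) := (hBf _ (hαlt j)).2.2 γ hj
          _ = α (j + 1) := (hαsucc j).symm
          _ ≤ iSup α := hαle (j + 1)
      · exact ((le_max_left _ _).trans hα0.ge).trans (hαle 0)
    have hCcl : ∀ u : Set Ordinal, u ⊆ C → u.Nonempty → sSup u < ω₁ → sSup u ∈ C := by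
      intro u hu hne hlt
      obtain ⟨x, hx⟩ := hne
      have hbdd : BddAbove u := ⟨ω₁, fun y hy => ((hu hy).1).le⟩
      have hxle : ∀ y ∈ u, y ≤ sSup u := fun y hy => le_csSup hbdd hy
      refine ⟨hlt, lt_of_lt_of_le (hu hx).2.1 (hxle x hx), ?_⟩
      intro γ hγ
      have hey : ∃ y ∈ u, γ < y := by
        by_contra hcon
        push_neg at hcon
        exact absurd (csSup_le ⟨x, hx⟩ hcon) (not_le.2 hγ)
      obtain ⟨y, hy, hγy⟩ := hey
      rcases lt_or_ge γ y with h' | h'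
      · exact lt_of_lt_of_le ((hu hy).2.2 γ h') (hxle y hy)
      · exact absurd h' (not_le.2 hγy)
    obtain ⟨δ, hδS, hδC⟩ := hS.2 C hCsub hCunb hCcl
    obtain ⟨hδω, hδt0, hδcl⟩ := hδC
    have hδpos : (0 : Ordinal) < δ := lt_of_le_of_lt zero_le hδt0
    have hδlim : Order.IsSuccLimit δ := by
      refine Ordinal.isSuccLimit_iff.2 ⟨pos_iff_ne_zero.1 hδpos, ?_⟩
      intro γ hγ
      exact hγ.2 (Order.lt_succ γ) (lt_of_le_of_lt (Order.succ_le_of_lt (hgspec γ (hγ.1.trans hδω)).2.1) (hδcl γ hγ.1))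
    have P2 : ∀ γ, γ < δ → ∃ s ∈ S, γ < s ∧ s < δ := by
      intro γ hγ
      obtain ⟨s, hsS, h1, h2⟩ := (hgspec γ (hγ.trans hδω)).2.2.1
      exact ⟨s, hsS, h1, h2.trans (hδcl γ hγ)⟩
    have P3 : ∀ t ∈ Reach c t0 δ, ∀ n, mx (F c t n) < δ := by
      intro t ht n
      obtain ⟨j, hj⟩ := Set.mem_iUnion.1 ht
      obtain ⟨γ, hγ, h⟩ := R_lt_of_limit c t0 hδlim j t hj
      exact lt_trans ((hgspec γ (hγ.trans hδω)).2.2.2 t (Set.mem_iUnion.2 ⟨j, h⟩) n)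
        (hδcl γ hγ)
    -- enumeration of Iio δ
    obtain ⟨e, he⟩ := (countable_Iio hδω).exists_eq_range ⟨0, hδpos⟩
    have helt : ∀ k, e k < δ := by
      intro k
      have : e k ∈ Set.Iio δ := by rw [he]; exact Set.mem_range_self k
      exact this
    -- selection below δ
    set sel : Ordinal → Ordinal := fun γ => if h : γ < δ then (P2 γ h).choose else 0
      with hseldef
    have hsel : ∀ γ, (h : γ < δ) → sel γ ∈ S ∧ γ < sel γ ∧ sel γ < δ := by
      intro γ h
      simp only [hseldef, dif_pos h]
      exact (P2 γ h).choose_spec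
    -- the chain
    set tc : ℕ → TS S := fun k => Nat.rec t0
      (fun k tk => ext1 (F c tk k) (sel (max (mx (F c tk k)) (e k)))) k with htcdef
    have htcs : ∀ k, tc (k + 1) =
        ext1 (F c (tc k) k) (sel (max (mx (F c (tc k) k)) (e k))) := fun k => rfl
    have inv : ∀ k, tc k ∈ Reach c t0 δ ∧ mx (tc k) < δ := by
      intro k; induction k with
      | zero => exact ⟨t0_mem_Reach c t0 δ, hδt0⟩
      | succ k ih =>
        have hu1 : F c (tc k) k ∈ Reach c t0 δ := F_mem_Reach c t0 ih.1 k
        have hu2 : mx (F c (tc k) k) < δ := P3 _ ih.1 k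
        have hmax : max (mx (F c (tc k) k)) (e k) < δ := max_lt hu2 (helt k)
        obtain ⟨hs1, hs2, hs3⟩ := hsel _ hmax
        have hv : sel (max (mx (F c (tc k) k)) (e k)) ∈ S ∧
            ∀ x ∈ (F c (tc k) k).carrier, x < sel (max (mx (F c (tc k) k)) (e k)) :=
          ⟨hs1, fun x hx => lt_of_le_of_lt (le_mx hS1 hx)
            (lt_of_le_of_lt (le_max_left _ _) hs2)⟩
        constructor
        · rw [htcs]; exact ext1_mem_Reach c t0 hu1 hs3
        · rw [htcs, mx_ext1 hv]; exact hs3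
    have hstep : ∀ k, F c (tc k) k ≤ tc (k + 1) ∧
        mx (F c (tc k) k) < mx (tc (k + 1)) ∧ e k < mx (tc (k + 1)) := by
      intro k
      have hu2 : mx (F c (tc k) k) < δ := P3 _ (inv k).1 k
      have hmax : max (mx (F c (tc k) k)) (e k) < δ := max_lt hu2 (helt k)
      obtain ⟨hs1, hs2, hs3⟩ := hsel _ hmax
      have hv : sel (max (mx (F c (tc k) k)) (e k)) ∈ S ∧
          ∀ x ∈ (F c (tc k) k).carrier, x < sel (max (mx (F c (tc k) k)) (e k)) :=
        ⟨hs1, fun x hx => lt_of_le_of_lt (le_mx hS1 hx)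
          (lt_of_le_of_lt (le_max_left _ _) hs2)⟩
      refine ⟨?_, ?_, ?_⟩
      · rw [htcs]; exact le_ext1 hv
      · rw [htcs, mx_ext1 hv]; exact lt_of_le_of_lt (le_max_left _ _) hs2
      · rw [htcs, mx_ext1 hv]; exact lt_of_le_of_lt (le_max_right _ _) hs2
    have hle : ∀ k, tc k ≤ tc (k + 1) := fun k => (le_F c (tc k) k).trans (hstep k).1
    have hmono : ∀ k l, k ≤ l → tc k ≤ tc l := by
      intro k l h
      induction h with
      | refl => exact le_refl _
      | step h ih => exact le_trans ih (hle _)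
    have hcof : ∀ σ, σ < δ → ∃ k, σ < mx (tc k) := by
      intro σ hσ
      have : σ ∈ Set.range e := by rw [← he]; exact hσ
      obtain ⟨k, rfl⟩ := this
      exact ⟨k + 1, (hstep k).2.2⟩
    have hbnd : ∀ k, ∀ x ∈ (tc k).carrier, x < δ :=
      fun k x hx => lt_of_le_of_lt (le_mx hS1 hx) (inv k).2
    have hTcl : SupClosed' (insert δ (⋃ k, (tc k).carrier)) := by
      intro u hu hne
      have hub' : ∀ x ∈ u, x ≤ δ := by
        intro x hx
        rcases hu hx with rfl | hx'
        · exact le_rfl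
        · obtain ⟨k, hk⟩ := Set.mem_iUnion.1 hx'
          exact (hbnd k x hk).le
      have hsle : sSup u ≤ δ := csSup_le hne hub'
      rcases eq_or_lt_of_le hsle with heq | hlt
      · rw [heq]; exact Set.mem_insert _ _
      · obtain ⟨k, hk⟩ := hcof _ hlt
        have hsub : u ⊆ (tc k).carrier := by
          intro x hx
          have hxle : x ≤ sSup u := le_csSup ⟨δ, hub'⟩ hx
          rcases hu hx with rfl | hx'
          · exact absurd (hxle.trans_lt hlt) (lt_irrefl _)
          · obtain ⟨j, hj⟩ := Set.mem_iUnion.1 hx'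
            rcases le_total j k with hjk | hkj
            · exact (hmono j k hjk).1 hj
            · exact (hmono k j hkj).2 (mx (tc k)) (mx_mem _) x hj (hxle.trans hk.le)
        exact Set.mem_insert_of_mem _ (Set.mem_iUnion.2 ⟨k, (tc k).closed' u hsub hne⟩)
    set T : TS S := ⟨insert δ (⋃ k, (tc k).carrier), ⟨δ, Set.mem_insert _ _⟩,
      Set.insert_subset hδS (Set.iUnion_subset fun k => (tc k).subset'), hTcl⟩ with hTdef
    have hTle : ∀ k, tc k ≤ T := by
      intro k
      refine ⟨fun x hx => Set.mem_insert_of_mem _ (Set.mem_iUnion.2 ⟨k, hx⟩), ?_⟩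
      intro a ha b hb hba
      rcases hb with rfl | hb'
      · exact absurd (lt_of_le_of_lt hba (hbnd k a ha)) (lt_irrefl b)
      · obtain ⟨j, hj⟩ := Set.mem_iUnion.1 hb'
        rcases le_total j k with hjk | hkj
        · exact (hmono j k hjk).1 hj
        · exact (hmono k j hkj).2 a ha b hj hba
    by_cases hEx : ∃ t', tc (c T) ≤ t' ∧ c t' = c T
    · have hcol : c (F c (tc (c T)) (c T)) = c T := F_color c hEx
      have hFleT : F c (tc (c T)) (c T) ≤ T := (hstep (c T)).1.trans (hTle (c T + 1))
      have hEq : F c (tc (c T)) (c T) = T := hcc _ _ hFleT hcol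
      have hδmem : δ ∈ (F c (tc (c T)) (c T)).carrier := by
        rw [hEq]; exact Set.mem_insert _ _
      have h1 : δ ≤ mx (F c (tc (c T)) (c T)) := le_mx hS1 hδmem
      have h2 : mx (F c (tc (c T)) (c T)) < δ := P3 _ (inv (c T)).1 (c T)
      exact absurd (h1.trans_lt h2) (lt_irrefl δ)
    · exact hEx ⟨T, hTle (c T), rfl⟩
  refine ⟨main, ?_⟩
  rintro ⟨f, hf⟩
  refine main ⟨fun n => f ⁻¹' {n}, ?_, ?_⟩
  · intro n x hx y hy hne hxy
    simp only [Set.mem_preimage, Set.mem_singleton_iff] at hx hy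
    exact hf x y (Or.inl (lt_of_le_of_ne hxy hne)) (hx.trans hy.symm)
  · exact Set.eq_univ_of_forall fun x => Set.mem_iUnion.2 ⟨f x, rfl⟩
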